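/- Let X be a 2-based Banach space with constants c, C whose natural parameterization r is continuously differentiable, let φ : ℝ → ℝ be the phase shift (r'(s) = r(φ(s)) for all s), and let P, T : ℝ → ℝ be the supercurvatures (r'(φ(s)) = −P(s)·r(s) + T(s)·r'(s) for all s). Suppose s ∈ ℝ is a point at which r is twice differentiable and φ is differentiable, and let ρ(s), τ(s) be the reals with r''(s) = −ρ(s)·r(s) + τ(s)·r'(s). Then ‖r''(s)‖ = φ'(s), ρ(s) = P(s)·φ'(s), τ(s) = T(s)·φ'(s), and |τ(s)| ≤ ((C + c)·C/c²)·|ρ(s)|. -/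

import Mathlib

noncomputable section
open MeasureTheory Set Filter
open scoped ENNReal Topology

variable {X : Type*} [NormedAddCommGroup X] [NormedSpace ℝ X]

/-- `e^{it} = cos t • e₁ + sin t • e₂` for the basis `b 0, b 1`. -/
def expV (b : Module.Basis (Fin 2) ℝ X) (t : ℝ) : X :=
  Real.cos t • b 0 + Real.sin t • b 1

/-- The polar parameterization `p(t) = e^{it}/‖e^{it}‖` of the unit sphere. -/
def polarParam (b : Module.Basis (Fin 2) ℝ X) (t : ℝ) : X :=
  ‖expV b t‖⁻¹ • expV b t

/-- The Euclidean norm `|x| = √(e₁*(x)² + e₂*(x)²)` associated to the basis. -/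
def euclNorm (b : Module.Basis (Fin 2) ℝ X) (x : X) : ℝ :=
  Real.sqrt ((b.coord 0 x)^2 + (b.coord 1 x)^2)

/-- `c = min{‖x‖ : |x| = 1}`. -/
def cConst (b : Module.Basis (Fin 2) ℝ X) : ℝ :=
  sInf (norm '' {x : X | euclNorm b x = 1})

/-- `C = max{‖x‖ : |x| = 1}`. -/
def CConst (b : Module.Basis (Fin 2) ℝ X) : ℝ :=
  sSup (norm '' {x : X | euclNorm b x = 1})

/-- The right derivative of a function `f : ℝ → X`. -/
def rightDeriv (f : ℝ → X) (t : ℝ) : X := derivWithin f (Ici t) t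

/-- The left derivative of a function `f : ℝ → X`. -/
def leftDeriv (f : ℝ → X) (t : ℝ) : X := derivWithin f (Iic t) t

/-- The arc-length function `s(t) = ∫₀^t ‖p'₊(u)‖ du`. -/
def arcLen (b : Module.Basis (Fin 2) ℝ X) (t : ℝ) : ℝ :=
  ∫ u in (0:ℝ)..t, ‖rightDeriv (polarParam b) u‖

/-- The half-length `L = s(π)` of the unit sphere. -/
def halfLen (b : Module.Basis (Fin 2) ℝ X) : ℝ := arcLen b Real.pi

/-- The inverse `t = s⁻¹` of the arc-length function. -/
def arcInv (b : Module.Basis (Fin 2) ℝ X) : ℝ → ℝ := Function.invFun (arcLen b)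

/-- The natural parameterization `r = p ∘ t` of the unit sphere. -/
def natParam (b : Module.Basis (Fin 2) ℝ X) : ℝ → X := polarParam b ∘ arcInv b

/-- Local absolute continuity of `f` with a.e. derivative `f'`, in the sense that `f` is
differentiable almost everywhere, `f'` is locally integrable, and `f` is recovered from `f'`
by integration. -/
def LocAC {E : Type*} [NormedAddCommGroup E] [NormedSpace ℝ E] [CompleteSpace E]
    (f f' : ℝ → E) : Prop :=
  (∀ᵐ t : ℝ, HasDerivAt f (f' t) t) ∧ LocallyIntegrable f' volume ∧
    ∀ a b : ℝ, a ≤ b → f b - f a = ∫ t in a..b, f' t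

/-- `s` is a Lebesgue point of `g`. -/
def LebesguePoint {E : Type*} [NormedAddCommGroup E] (g : ℝ → E) (s : ℝ) : Prop :=
  Tendsto (fun ε : ℝ => (1/ε) * ∫ t in (0:ℝ)..ε, ‖g (s + t) - g s‖) (𝓝[≠] (0:ℝ)) (𝓝 0)

/-! Let `f` be a supporting functional of the unit ball at `r s`. Then `f ∘ r` is maximal at `s`,
so `f (r' s) = 0` and `f (r'' s) ≤ 0`: the vectors `r s`, `r' s` are linearly independent and
`ρ ≥ 0`. Differentiating `r' = r ∘ φ` gives `r'' s = φ' • r' (φ s)`, and comparing coefficients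
yields `ρ = P s * φ'` and `τ = T s * φ'`. In the plane `det (r, r')` never vanishes, so it keeps its
sign along the curve; this forces `P s > 0`, hence `φ' ≥ 0` and `‖r'' s‖ = φ'`. A supporting
functional at `r (φ s) = r' s` gives `|T s| ≤ |P s|`, so `|τ| ≤ |ρ|`, and the constant
`(C + c) C / c²` is at least `1` since `0 < c ≤ C`. -/

theorem mul_pos_of_continuous_of_ne_zero {Y : Type*} [TopologicalSpace Y] [PreconnectedSpace Y]
    {f : Y → ℝ} (hf : Continuous f) (hf0 : ∀ y, f y ≠ 0) (a b : Y) : 0 < f a * f b := by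
  by_contra! hab
  obtain ⟨y, hy⟩ : (0 : ℝ) ∈ range f := by
    rcases mul_nonpos_iff.1 hab with ⟨ha, hb⟩ | ⟨ha, hb⟩
    · exact mem_range_of_exists_le_of_exists_ge hf ⟨b, hb⟩ ⟨a, ha⟩
    · exact mem_range_of_exists_le_of_exists_ge hf ⟨a, ha⟩ ⟨b, hb⟩
  exact hf0 y hy

/-- By the second-derivative test a positive second derivative would make `x` also a local
minimum, so `f` would be locally constant there. -/
theorem IsLocalMax.deriv_deriv_nonpos {f : ℝ → ℝ} {x : ℝ} (h : IsLocalMax f x)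
    (hc : ContinuousAt f x) : deriv (deriv f) x ≤ 0 := by
  by_contra! hpos
  have hmin := isLocalMin_of_deriv_deriv_pos hpos h.deriv_eq_zero hc
  have hconst : f =ᶠ[𝓝 x] fun _ => f x :=
    (h.and hmin).mono fun y hy => le_antisymm hy.1 hy.2
  have hderiv : deriv f =ᶠ[𝓝 x] fun _ => 0 :=
    hconst.eventuallyEq_nhds.mono fun y hy => by rw [hy.deriv_eq, deriv_const]
  rw [hderiv.deriv_eq, deriv_const] at hpos
  exact hpos.false

theorem Module.Basis.det_fin_two_apply {R M : Type*} [CommRing R] [AddCommGroup M] [Module R M]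
    (b : Module.Basis (Fin 2) R M) (x y : M) :
    b.det ![x, y] = b.repr x 0 * b.repr y 1 - b.repr y 0 * b.repr x 1 := by
  simp [Module.Basis.det_apply, Matrix.det_fin_two, Module.Basis.toMatrix_apply]

section UnitSphereCurve

variable {E : Type*} [NormedAddCommGroup E] [NormedSpace ℝ E] {γ : ℝ → E} {f : E →L[ℝ] ℝ}
  {t : ℝ}

theorem exists_supporting_functional (hnorm : ∀ u, ‖γ u‖ = 1) (t : ℝ) :
    ∃ f : E →L[ℝ] ℝ, ‖f‖ = 1 ∧ f (γ t) = 1 ∧ IsLocalMax (fun u => f (γ u)) t := by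
  obtain ⟨f, hf, hft⟩ := exists_dual_vector ℝ (γ t) (norm_ne_zero_iff.1 (by simp [hnorm t]))
  have hft' : f (γ t) = 1 := by simp [hft, hnorm t]
  refine ⟨f, hf, hft', IsMaxOn.isLocalMax (fun u _ => ?_) univ_mem⟩
  calc f (γ u) ≤ ‖f‖ * ‖γ u‖ := (le_abs_self _).trans (f.le_opNorm _)
    _ = f (γ t) := by simp [hf, hnorm u, hft']

theorem apply_deriv_eq_zero_of_isLocalMax (hγ : DifferentiableAt ℝ γ t)
    (h : IsLocalMax (fun u => f (γ u)) t) : f (deriv γ t) = 0 := by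
  rw [← (f.hasFDerivAt.comp_hasDerivAt t hγ.hasDerivAt).deriv]
  exact h.deriv_eq_zero

theorem apply_deriv_deriv_nonpos_of_isLocalMax (hγ : Differentiable ℝ γ)
    (h : IsLocalMax (fun u => f (γ u)) t) {g : E} (hg : HasDerivAt (deriv γ) g t) : f g ≤ 0 := by
  have hderiv : deriv (fun u => f (γ u)) = fun u => f (deriv γ u) :=
    funext fun u => (f.hasFDerivAt.comp_hasDerivAt u (hγ u).hasDerivAt).deriv
  have := h.deriv_deriv_nonpos (f.continuous.comp hγ.continuous).continuousAt
  rwa [hderiv, (f.hasFDerivAt.comp_hasDerivAt t hg).deriv (f := fun u => f (deriv γ u))] at this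

theorem linearIndependent_self_deriv (hnorm : ∀ u, ‖γ u‖ = 1) (hγ : DifferentiableAt ℝ γ t)
    (hne : deriv γ t ≠ 0) : LinearIndependent ℝ ![γ t, deriv γ t] := by
  obtain ⟨f, -, hft, hmax⟩ := exists_supporting_functional hnorm t
  have hf' := apply_deriv_eq_zero_of_isLocalMax hγ hmax
  refine LinearIndependent.pair_iff.2 fun a c hac => ?_
  have ha : a = 0 := by simpa [hft, hf'] using congrArg f hac
  subst ha
  exact ⟨rfl, (smul_eq_zero.1 (by simpa using hac)).resolve_right hne⟩

end UnitSphereCurve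

section PhaseShift

variable {E : Type*} [NormedAddCommGroup E] [NormedSpace ℝ E] {γ : ℝ → E} {φ : ℝ → ℝ}
  {s φ' P T ρ τ : ℝ}

theorem hasDerivAt_deriv_of_deriv_eq_comp (hγ : Differentiable ℝ γ)
    (hφ : ∀ u, deriv γ u = γ (φ u)) (hφd : HasDerivAt φ φ' s) :
    HasDerivAt (deriv γ) (φ' • deriv γ (φ s)) s :=
  ((hγ (φ s)).hasDerivAt.scomp s hφd).congr_of_eventuallyEq (Eventually.of_forall hφ)

theorem curvature_eq_mul_of_deriv_eq_comp (hnorm : ∀ u, ‖γ u‖ = 1) (hγ : Differentiable ℝ γ)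
    (hφ : ∀ u, deriv γ u = γ (φ u)) (hPT : deriv γ (φ s) = (-P) • γ s + T • deriv γ s)
    (hφd : HasDerivAt φ φ' s)
    (h2 : HasDerivAt (deriv γ) ((-ρ) • γ s + τ • deriv γ s) s) :
    ρ = P * φ' ∧ τ = T * φ' := by
  have hli := linearIndependent_self_deriv hnorm (hγ s) (by simp [← norm_ne_zero_iff, hφ, hnorm])
  have hg := h2.unique (hasDerivAt_deriv_of_deriv_eq_comp hγ hφ hφd)
  rw [hPT, smul_add, smul_smul, smul_smul] at hg
  obtain ⟨hρ, hτ⟩ := hli.eq_of_pair hg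
  exact ⟨by linarith, by linarith⟩

theorem nonneg_of_hasDerivAt_deriv (hnorm : ∀ u, ‖γ u‖ = 1) (hγ : Differentiable ℝ γ)
    (h2 : HasDerivAt (deriv γ) ((-ρ) • γ s + τ • deriv γ s) s) : 0 ≤ ρ := by
  obtain ⟨f, -, hfs, hmax⟩ := exists_supporting_functional hnorm s
  have hf' := apply_deriv_eq_zero_of_isLocalMax (hγ s) hmax
  have := apply_deriv_deriv_nonpos_of_isLocalMax hγ hmax h2
  simp only [map_add, map_smul, hfs, hf', smul_eq_mul] at this
  linarith

theorem abs_le_abs_of_deriv_eq_comp (hnorm : ∀ u, ‖γ u‖ = 1) (hγ : Differentiable ℝ γ)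
    (hφ : ∀ u, deriv γ u = γ (φ u)) (hPT : deriv γ (φ s) = (-P) • γ s + T • deriv γ s) :
    |T| ≤ |P| := by
  obtain ⟨f, hf, hfφ, hmax⟩ := exists_supporting_functional hnorm (φ s)
  have hf' := apply_deriv_eq_zero_of_isLocalMax (hγ (φ s)) hmax
  have hT : T = P * f (γ s) := by
    simp only [hPT, map_add, map_smul, hφ, hfφ, smul_eq_mul] at hf'
    linarith
  have hfs : |f (γ s)| ≤ 1 := by
    simpa [hf, hnorm] using f.le_opNorm (γ s)
  rw [hT, abs_mul]
  exact mul_le_of_le_one_right (abs_nonneg P) hfs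

/-- In the plane the orientation `det (γ, γ')` cannot change sign, and `γ(φ s) = γ'(s)` turns
`det (γ(φ s), γ'(φ s))` into `P · det (γ s, γ' s)`. -/
theorem pos_of_deriv_eq_comp (b : Module.Basis (Fin 2) ℝ E) (hC1 : ContDiff ℝ 1 γ)
    (hnorm : ∀ u, ‖γ u‖ = 1) (hφ : ∀ u, deriv γ u = γ (φ u))
    (hPT : deriv γ (φ s) = (-P) • γ s + T • deriv γ s) : 0 < P := by
  have : FiniteDimensional ℝ E := b.finiteDimensional_of_finite
  set D : ℝ → ℝ := fun u => b.det ![γ u, deriv γ u]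
  have hD : Continuous D := by
    have hrepr : ∀ i, Continuous fun x : E => b.repr x i := fun i =>
      (continuous_apply i).comp b.equivFunL.continuous
    simp only [D, b.det_fin_two_apply]
    have h0 := hC1.continuous
    have h1 := hC1.continuous_deriv le_rfl
    fun_prop
  have hD0 : ∀ u, D u ≠ 0 := fun u => by
    have hli := linearIndependent_self_deriv hnorm (hC1.differentiable one_ne_zero u)
      (by simp [← norm_ne_zero_iff, hφ, hnorm])
    have hspan := hli.span_eq_top_of_card_eq_finrank' (by simp [Module.finrank_eq_card_basis b])
    exact ((b.is_basis_iff_det).1 ⟨hli, hspan⟩).ne_zero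
  have hDφ : D (φ s) = P * D s := by
    simp only [D, ← hφ, hPT, b.det_fin_two_apply, map_add, map_smul, Finsupp.add_apply,
      Finsupp.smul_apply, smul_eq_mul]
    ring
  have := mul_pos_of_continuous_of_ne_zero hD hD0 (φ s) s
  rw [hDφ, mul_assoc] at this
  exact pos_of_mul_pos_left this (mul_self_nonneg _)

end PhaseShift

theorem expV_ne_zero (b : Module.Basis (Fin 2) ℝ X) (t : ℝ) : expV b t ≠ 0 := by
  intro h
  have hcs := Fintype.linearIndependent_iff.1 b.linearIndependent ![Real.cos t, Real.sin t]
    (by simpa [Fin.sum_univ_two, expV] using h)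
  have hc : Real.cos t = 0 := hcs 0
  have hs : Real.sin t = 0 := hcs 1
  simpa [hc, hs] using Real.sin_sq_add_cos_sq t

theorem norm_natParam (b : Module.Basis (Fin 2) ℝ X) (t : ℝ) : ‖natParam b t‖ = 1 :=
  norm_smul_inv_norm (expV_ne_zero b _)

theorem euclNorm_eq_norm (b : Module.Basis (Fin 2) ℝ X) (x : X) :
    euclNorm b x = ‖(EuclideanSpace.equiv (Fin 2) ℝ).symm (b.equivFunL x)‖ := by
  simp [euclNorm, EuclideanSpace.norm_eq, Fin.sum_univ_two]

theorem isCompact_euclNorm_eq_one (b : Module.Basis (Fin 2) ℝ X) :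
    IsCompact {x : X | euclNorm b x = 1} := by
  let e : X ≃L[ℝ] EuclideanSpace ℝ (Fin 2) :=
    b.equivFunL.trans (EuclideanSpace.equiv (Fin 2) ℝ).symm
  have hset : {x : X | euclNorm b x = 1} = e ⁻¹' Metric.sphere 0 1 := by
    ext x
    simp [euclNorm_eq_norm, e]
  rw [hset]
  exact e.toHomeomorph.isCompact_preimage.2 (isCompact_sphere 0 1)

theorem euclNorm_basis_zero (b : Module.Basis (Fin 2) ℝ X) : euclNorm b (b 0) = 1 := by
  simp [euclNorm]

theorem cConst_pos (b : Module.Basis (Fin 2) ℝ X) : 0 < cConst b := by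
  obtain ⟨x, hx, hxc⟩ := ((isCompact_euclNorm_eq_one b).image continuous_norm).sInf_mem
    ⟨_, b 0, euclNorm_basis_zero b, rfl⟩
  have hx0 : x ≠ 0 := by
    rintro rfl
    simp [euclNorm] at hx
  rw [cConst, ← hxc]
  exact norm_pos_iff.2 hx0

theorem cConst_le_CConst (b : Module.Basis (Fin 2) ℝ X) : cConst b ≤ CConst b := by
  have hK := (isCompact_euclNorm_eq_one b).image continuous_norm
  exact csInf_le_csSup ⟨_, b 0, euclNorm_basis_zero b, rfl⟩ hK.bddBelow hK.bddAbove

theorem curvature_eq_supercurvature_mul_phase_general (b : Module.Basis (Fin 2) ℝ X)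
    (hC1 : ContDiff ℝ 1 (natParam b))
    (φ P T : ℝ → ℝ)
    (hφ : ∀ u : ℝ, deriv (natParam b) u = natParam b (φ u))
    (hPT : ∀ u : ℝ, deriv (natParam b) (φ u) =
      (-(P u)) • natParam b u + T u • deriv (natParam b) u)
    (s φ' ρ τ : ℝ) (g : X)
    (hφd : HasDerivAt φ φ' s)
    (h2 : HasDerivAt (deriv (natParam b)) g s)
    (heq : g = (-ρ) • natParam b s + τ • deriv (natParam b) s) :
    ‖g‖ = φ' ∧ ρ = P s * φ' ∧ τ = T s * φ' ∧
      |τ| ≤ ((CConst b + cConst b) * CConst b / (cConst b)^2) * |ρ| := by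
  have hr : Differentiable ℝ (natParam b) := hC1.differentiable one_ne_zero
  have hnorm := norm_natParam b
  subst heq
  obtain ⟨hρ, hτ⟩ := curvature_eq_mul_of_deriv_eq_comp hnorm hr hφ (hPT s) hφd h2
  have hρ_nonneg : 0 ≤ ρ := nonneg_of_hasDerivAt_deriv hnorm hr h2
  have hP_pos : 0 < P s := pos_of_deriv_eq_comp b hC1 hnorm hφ (hPT s)
  have hφ'_nonneg : 0 ≤ φ' := nonneg_of_mul_nonneg_right (hρ ▸ hρ_nonneg) hP_pos
  have hc := cConst_pos b
  have hK : 1 ≤ (CConst b + cConst b) * CConst b / cConst b ^ 2 := by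
    rw [one_le_div (by positivity)]
    nlinarith [cConst_le_CConst b]
  refine ⟨?_, hρ, hτ, ?_⟩
  · rw [h2.unique (hasDerivAt_deriv_of_deriv_eq_comp hr hφ hφd), norm_smul, hφ, hnorm,
      Real.norm_of_nonneg hφ'_nonneg, mul_one]
  · calc |τ| = |T s| * |φ'| := by rw [hτ, abs_mul]
      _ ≤ |P s| * |φ'| :=
        mul_le_mul_of_nonneg_right (abs_le_abs_of_deriv_eq_comp hnorm hr hφ (hPT s)) (abs_nonneg _)
      _ = |ρ| := by rw [hρ, abs_mul]
      _ ≤ _ := le_mul_of_one_le_left (abs_nonneg ρ) hK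

/-- Relations between curvatures and supercurvatures: `‖r''(s)‖ = φ'(s)`,
`ρ(s) = P(s)·φ'(s)`, `τ(s) = T(s)·φ'(s)` and `|τ(s)| ≤ ((C+c)·C/c²)·|ρ(s)|`. -/
theorem curvature_eq_supercurvature_mul_phase [CompleteSpace X] (b : Module.Basis (Fin 2) ℝ X)
    (hC1 : ContDiff ℝ 1 (natParam b))
    (φ P T : ℝ → ℝ)
    (hφ : ∀ u : ℝ, deriv (natParam b) u = natParam b (φ u))
    (hPT : ∀ u : ℝ, deriv (natParam b) (φ u) =
      (-(P u)) • natParam b u + T u • deriv (natParam b) u)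
    (s φ' ρ τ : ℝ) (g : X)
    (hφd : HasDerivAt φ φ' s)
    (h2 : HasDerivAt (deriv (natParam b)) g s)
    (heq : g = (-ρ) • natParam b s + τ • deriv (natParam b) s) :
    ‖g‖ = φ' ∧ ρ = P s * φ' ∧ τ = T s * φ' ∧
      |τ| ≤ ((CConst b + cConst b) * CConst b / (cConst b)^2) * |ρ| :=
  curvature_eq_supercurvature_mul_phase_general b hC1 φ P T hφ hPT s φ' ρ τ g hφd h2 heq
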